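/- Let B ∈ ℂ^{m×n}, E ∈ ℂ^{s×n}, A = [B; E], and let û = [f; y] be a unit left singular vector of A with singular value σ̂ satisfying σ̂² ≠ σ_j² for all singular values σ_j of B. Let Z = [[U_k, 0]; [0, I_s]], where U_k holds the k leading left singular vectors of B. If σ_{k+1} < σ̂, then min_{z ∈ range(Z)} ‖û - z‖ ≤ γ σ_{k+1}/(σ̂² - σ_{k+1}²), where γ = max_{k < j} |(E v^{(j)})^H y| ≤ ‖E^H y‖ (taking γ = ‖E^H y‖ suffices). -/

import Mathlib

open Matrix

/-- The Euclidean (ℓ₂) norm of a complex vector. -/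
noncomputable def l2norm {ι : Type*} [Fintype ι] (w : ι → ℂ) : ℝ :=
  Real.sqrt (∑ i, Complex.normSq (w i))

/-!
Write `x = Eᴴ y`. The top block row of `A Aᴴ û = σ'² û` reads `(B Bᴴ - σ'² I) f = -B x`, and
since `B Bᴴ - σ'² I` is invertible, `f = ∑ⱼ χⱼ u⁽ʲ⁾` with `χⱼ = σⱼ ⟨v⁽ʲ⁾, x⟩ / (σ'² - σⱼ²)`.
Taking the point `[∑_{j ≤ k} χⱼ u⁽ʲ⁾; y]` of `range Z` leaves the residual `∑_{j > k} χⱼ u⁽ʲ⁾`.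
For `j > k` we have `σⱼ ≤ σ_{k+1} < σ'`, and `t ↦ t / (σ'² - t²)` increases on `[0, σ')`, so
`|χⱼ| ≤ σ_{k+1} / (σ'² - σ_{k+1}²) · |⟨v⁽ʲ⁾, x⟩|`; Bessel's inequality for the `v⁽ʲ⁾` finishes.
-/

theorem Orthonormal.norm_sum_smul_le {𝕜 E F ι : Type*} [RCLike 𝕜]
    [NormedAddCommGroup E] [InnerProductSpace 𝕜 E] [NormedAddCommGroup F] [InnerProductSpace 𝕜 F]
    {u : ι → E} {v : ι → F} (hu : Orthonormal 𝕜 u) (hv : Orthonormal 𝕜 v) (x : F)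
    {s : Finset ι} {c : ι → 𝕜} {R : ℝ} (hR : 0 ≤ R)
    (hc : ∀ j ∈ s, ‖c j‖ ≤ R * ‖inner 𝕜 (v j) x‖) :
    ‖∑ j ∈ s, c j • u j‖ ≤ R * ‖x‖ := by
  refine (pow_le_pow_iff_left₀ (norm_nonneg _) (by positivity) two_ne_zero).mp ?_
  calc ‖∑ j ∈ s, c j • u j‖ ^ 2 = ∑ j ∈ s, ‖c j‖ ^ 2 := by
        simpa using hu.orthogonalFamily.norm_sum c s
    _ ≤ ∑ j ∈ s, R ^ 2 * ‖inner 𝕜 (v j) x‖ ^ 2 := Finset.sum_le_sum fun j hj => by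
        rw [← mul_pow]; exact pow_le_pow_left₀ (norm_nonneg _) (hc j hj) 2
    _ = R ^ 2 * ∑ j ∈ s, ‖inner 𝕜 (v j) x‖ ^ 2 := (Finset.mul_sum ..).symm
    _ ≤ R ^ 2 * ‖x‖ ^ 2 := by gcongr; exact hv.sum_inner_products_le x
    _ = (R * ‖x‖) ^ 2 := (mul_pow ..).symm

theorem monotoneOn_div_sq_sub_sq (c : ℝ) :
    MonotoneOn (fun t : ℝ => t / (c ^ 2 - t ^ 2)) (Set.Ico 0 c) := by
  intro a ⟨ha, hac⟩ b ⟨_, hbc⟩ hab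
  have hb0 : 0 < c ^ 2 - b ^ 2 := by nlinarith
  have ha0 : 0 < c ^ 2 - a ^ 2 := by nlinarith
  dsimp only
  rw [div_le_div_iff₀ ha0 hb0]
  nlinarith [mul_nonneg (sub_nonneg.2 hab)
    (add_nonneg (sq_nonneg c) (mul_nonneg ha (ha.trans hab)))]

theorem Fin.sum_univ_eq_sum_castLE_add {M : Type*} [AddCommMonoid M] {k N : ℕ} (h : k ≤ N)
    (F : Fin N → M) :
    ∑ j, F j = ∑ j : Fin k, F (Fin.castLE h j) +
      ∑ j ∈ Finset.univ.filter fun j : Fin N => k ≤ (j : ℕ), F j := by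
  rw [← Finset.sum_filter_add_sum_filter_not Finset.univ (fun j : Fin N => (j : ℕ) < k)]
  congr 1
  · calc _ = ∑ j ∈ Finset.univ.map (Fin.castLEEmb h), F j := by
          congr 1; ext j
          simpa using ⟨fun hj => ⟨⟨j, hj⟩, rfl⟩, by rintro ⟨a, rfl⟩; exact a.2⟩
      _ = _ := Finset.sum_map _ _ _
  · simp

section CoordinateVectors

variable {ι α β : Type*} [DecidableEq ι] [Fintype α] [Fintype β]

theorem l2norm_eq_norm_toLp (w : α → ℂ) : l2norm w = ‖WithLp.toLp 2 w‖ := by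
  simp [l2norm, EuclideanSpace.norm_eq, Complex.normSq_eq_norm_sq]

theorem l2norm_elim_sub_elim_self (a b : α → ℂ) (w : β → ℂ) :
    l2norm (Sum.elim a w - Sum.elim b w) = l2norm (a - b) := by
  simp [l2norm, Fintype.sum_sum_type]

theorem orthonormal_toLp_of_dotProduct {u : ι → α → ℂ}
    (hu : ∀ i j, star (u i) ⬝ᵥ u j = if i = j then 1 else 0) :
    Orthonormal ℂ fun i => WithLp.toLp 2 (u i) := by
  rw [orthonormal_iff_ite]
  intro i j
  rw [EuclideanSpace.inner_toLp_toLp, dotProduct_comm, hu]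

theorem l2norm_sum_smul_le {u : ι → α → ℂ} {v : ι → β → ℂ}
    (hu : ∀ i j, star (u i) ⬝ᵥ u j = if i = j then 1 else 0)
    (hv : ∀ i j, star (v i) ⬝ᵥ v j = if i = j then 1 else 0) (x : β → ℂ)
    {s : Finset ι} {c : ι → ℂ} {R : ℝ} (hR : 0 ≤ R)
    (hc : ∀ j ∈ s, ‖c j‖ ≤ R * ‖star (v j) ⬝ᵥ x‖) :
    l2norm (∑ j ∈ s, c j • u j) ≤ R * l2norm x := by
  rw [l2norm_eq_norm_toLp, l2norm_eq_norm_toLp, WithLp.toLp_sum]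
  refine (orthonormal_toLp_of_dotProduct hu).norm_sum_smul_le
    (orthonormal_toLp_of_dotProduct hv) _ hR fun j hj => ?_
  rw [EuclideanSpace.inner_toLp_toLp, dotProduct_comm]
  exact hc j hj

theorem star_dotProduct_sum_smul [Fintype ι] {u : ι → α → ℂ}
    (hu : ∀ i j, star (u i) ⬝ᵥ u j = if i = j then 1 else 0) (c : ι → ℂ) (j : ι) :
    star (u j) ⬝ᵥ ∑ l, c l • u l = c j := by
  simp [dotProduct_sum, hu]

end CoordinateVectors

theorem sum_smul_vecMulVec_mulVec {ι m n R : Type*} [Fintype n] [CommSemiring R]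
    (s : Finset ι) (a : ι → R) (u : ι → m → R) (w : ι → n → R) (x : n → R) :
    (∑ j ∈ s, a j • vecMulVec (u j) (w j)) *ᵥ x = ∑ j ∈ s, (a j * (w j ⬝ᵥ x)) • u j := by
  simp only [sum_mulVec, smul_mulVec, vecMulVec_mulVec, op_smul_eq_smul, smul_smul]

theorem conjTranspose_sum_ofReal_smul_vecMulVec {ι m n : Type*} (s : Finset ι) (σ : ι → ℝ)
    (u : ι → m → ℂ) (v : ι → n → ℂ) :
    (∑ j ∈ s, (σ j : ℂ) • vecMulVec (u j) (star (v j)))ᴴ =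
      ∑ j ∈ s, (σ j : ℂ) • vecMulVec (v j) (star (u j)) := by
  simp [conjTranspose_sum, conjTranspose_smul, conjTranspose_vecMulVec]

theorem sub_smul_one_mulVec_eq_neg_of_fromRows {m n s : Type*} [Fintype m] [Fintype n]
    [Fintype s] [DecidableEq m] {B : Matrix m n ℂ} {E : Matrix s n ℂ} {f : m → ℂ} {y : s → ℂ}
    {μ : ℂ} (h : (fromRows B E * (fromRows B E)ᴴ) *ᵥ Sum.elim f y = μ • Sum.elim f y) :
    (B * Bᴴ - μ • 1) *ᵥ f = -(B *ᵥ (Eᴴ *ᵥ y)) := by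
  rw [conjTranspose_fromRows_eq_fromCols_conjTranspose, fromRows_mul_fromCols,
    fromBlocks_mulVec] at h
  have htop : (B * Bᴴ) *ᵥ f + (B * Eᴴ) *ᵥ y = μ • f := by
    funext i; simpa using congrFun h (Sum.inl i)
  rw [sub_mulVec, smul_mulVec, one_mulVec, ← htop, mulVec_mulVec]
  abel

/-- The coefficients `χⱼ` of the paper, with `gⱼ = ⟨v⁽ʲ⁾, Eᴴ y⟩`. -/
noncomputable def secularCoeff {ι : Type*} (σ : ι → ℝ) (σ' : ℝ) (g : ι → ℂ) (j : ι) : ℂ :=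
  σ j * g j / ((σ' : ℂ) ^ 2 - (σ j : ℂ) ^ 2)

section SecularEquation

variable {ι m n : Type*} [Fintype ι] [DecidableEq ι] [Fintype m] [Fintype n]
  {B : Matrix m n ℂ} {u : ι → m → ℂ} {v : ι → n → ℂ} {σ : ι → ℝ}

theorem mul_conjTranspose_mulVec_sum_smul
    (hu : ∀ i j, star (u i) ⬝ᵥ u j = if i = j then 1 else 0)
    (hv : ∀ i j, star (v i) ⬝ᵥ v j = if i = j then 1 else 0)
    (hB : B = ∑ j, (σ j : ℂ) • vecMulVec (u j) (star (v j))) (c : ι → ℂ) :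
    (B * Bᴴ) *ᵥ ∑ j, c j • u j = ∑ j, ((σ j : ℂ) ^ 2 * c j) • u j := by
  rw [← mulVec_mulVec, hB, conjTranspose_sum_ofReal_smul_vecMulVec, sum_smul_vecMulVec_mulVec]
  simp only [sum_smul_vecMulVec_mulVec, star_dotProduct_sum_smul hu, star_dotProduct_sum_smul hv,
    ← mul_assoc, ← sq]

theorem sub_smul_one_mulVec_sum_secularCoeff_smul [DecidableEq m]
    (hu : ∀ i j, star (u i) ⬝ᵥ u j = if i = j then 1 else 0)
    (hv : ∀ i j, star (v i) ⬝ᵥ v j = if i = j then 1 else 0)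
    (hB : B = ∑ j, (σ j : ℂ) • vecMulVec (u j) (star (v j)))
    {σ' : ℝ} (hne : ∀ j, σ' ^ 2 ≠ σ j ^ 2) (x : n → ℂ) :
    (B * Bᴴ - (σ' : ℂ) ^ 2 • 1) *ᵥ ∑ j, secularCoeff σ σ' (fun j => star (v j) ⬝ᵥ x) j • u j =
      -(B *ᵥ x) := by
  rw [sub_mulVec, smul_mulVec, one_mulVec, mul_conjTranspose_mulVec_sum_smul hu hv hB,
    Finset.smul_sum, ← Finset.sum_sub_distrib, hB, sum_smul_vecMulVec_mulVec,
    ← Finset.sum_neg_distrib]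
  refine Finset.sum_congr rfl fun j _ => ?_
  have hden : (σ' : ℂ) ^ 2 - (σ j : ℂ) ^ 2 ≠ 0 := by
    exact_mod_cast sub_ne_zero.mpr (hne j)
  rw [smul_smul, ← sub_smul, ← neg_smul, secularCoeff]
  congr 1
  field_simp
  ring

theorem eq_sum_secularCoeff_smul [DecidableEq m]
    (hu : ∀ i j, star (u i) ⬝ᵥ u j = if i = j then 1 else 0)
    (hv : ∀ i j, star (v i) ⬝ᵥ v j = if i = j then 1 else 0)
    (hB : B = ∑ j, (σ j : ℂ) • vecMulVec (u j) (star (v j)))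
    {σ' : ℝ} (hne : ∀ j, σ' ^ 2 ≠ σ j ^ 2) (hinv : IsUnit (B * Bᴴ - (σ' : ℂ) ^ 2 • 1))
    {f : m → ℂ} {x : n → ℂ} (hf : (B * Bᴴ - (σ' : ℂ) ^ 2 • 1) *ᵥ f = -(B *ᵥ x)) :
    f = ∑ j, secularCoeff σ σ' (fun j => star (v j) ⬝ᵥ x) j • u j :=
  mulVec_injective_iff_isUnit.mpr hinv
    (hf.trans (sub_smul_one_mulVec_sum_secularCoeff_smul hu hv hB hne x).symm)

end SecularEquation

theorem norm_secularCoeff_le {ι : Type*} {σ : ι → ℝ} {σ' t : ℝ} (g : ι → ℂ) {j : ι}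
    (hσ : 0 ≤ σ j) (hj : σ j ≤ t) (ht : t < σ') :
    ‖secularCoeff σ σ' g j‖ ≤ t / (σ' ^ 2 - t ^ 2) * ‖g j‖ := by
  have hden : 0 < σ' ^ 2 - σ j ^ 2 := by nlinarith
  have hnorm : ‖secularCoeff σ σ' g j‖ = σ j / (σ' ^ 2 - σ j ^ 2) * ‖g j‖ := by
    rw [secularCoeff, ← Complex.ofReal_pow, ← Complex.ofReal_pow, ← Complex.ofReal_sub,
      norm_div, norm_mul, Complex.norm_real, Complex.norm_real, Real.norm_of_nonneg hσ,
      Real.norm_of_nonneg hden.le]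
    ring
  rw [hnorm]
  exact mul_le_mul_of_nonneg_right
    (monotoneOn_div_sq_sub_sq σ' ⟨hσ, hj.trans_lt ht⟩ ⟨hσ.trans hj, ht⟩ hj) (norm_nonneg _)

theorem distance_bound_leading_left_singular_basis_general {m n s k : ℕ}
    (B : Matrix (Fin m) (Fin n) ℂ) (E : Matrix (Fin s) (Fin n) ℂ)
    (A : Matrix (Fin m ⊕ Fin s) (Fin n) ℂ) (hA : A = fromRows B E)
    (u : Fin (Nat.min m n) → Fin m → ℂ) (v : Fin (Nat.min m n) → Fin n → ℂ)
    (σ : Fin (Nat.min m n) → ℝ)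
    (hu : ∀ i j, star (u i) ⬝ᵥ u j = if i = j then 1 else 0)
    (hv : ∀ i j, star (v i) ⬝ᵥ v j = if i = j then 1 else 0)
    (hB : B = ∑ j, ((σ j : ℝ) : ℂ) • vecMulVec (u j) (star (v j)))
    (hσanti : Antitone σ) (hσnn : ∀ j, 0 ≤ σ j)
    (hkm : k < Nat.min m n)
    (σ' : ℝ) (f : Fin m → ℂ) (y : Fin s → ℂ)
    (hne : ∀ j, σ' ^ 2 ≠ (σ j) ^ 2)
    (hinv : IsUnit (B * Bᴴ - ((σ' : ℂ) ^ 2) • (1 : Matrix (Fin m) (Fin m) ℂ)))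
    (hsv : (A * Aᴴ) *ᵥ Sum.elim f y = ((σ' : ℂ) ^ 2) • Sum.elim f y)
    (hgap : σ ⟨k, hkm⟩ < σ') :
    sInf {d : ℝ | ∃ (c : Fin k → ℂ) (w : Fin s → ℂ),
        d = l2norm (Sum.elim f y -
          Sum.elim (∑ j : Fin k, c j • u (Fin.castLE hkm.le j)) w)} ≤
      l2norm (Eᴴ *ᵥ y) * σ ⟨k, hkm⟩ / (σ' ^ 2 - (σ ⟨k, hkm⟩) ^ 2) := by
  subst hA
  set χ := secularCoeff σ σ' fun j => star (v j) ⬝ᵥ (Eᴴ *ᵥ y)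
  have hf : f = ∑ j, χ j • u j :=
    eq_sum_secularCoeff_smul hu hv hB hne hinv (sub_smul_one_mulVec_eq_neg_of_fromRows hsv)
  refine csInf_le_of_le ⟨0, ?_⟩ ⟨fun j => χ (Fin.castLE hkm.le j), y, rfl⟩ ?_
  · rintro _ ⟨c, w, rfl⟩
    exact Real.sqrt_nonneg _
  have hR : 0 ≤ σ ⟨k, hkm⟩ / (σ' ^ 2 - σ ⟨k, hkm⟩ ^ 2) :=
    div_nonneg (hσnn _) (sub_nonneg.2 (pow_le_pow_left₀ (hσnn _) hgap.le 2))
  rw [l2norm_elim_sub_elim_self, hf, Fin.sum_univ_eq_sum_castLE_add hkm.le, add_sub_cancel_left]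
  calc _ ≤ σ ⟨k, hkm⟩ / (σ' ^ 2 - σ ⟨k, hkm⟩ ^ 2) * l2norm (Eᴴ *ᵥ y) :=
        l2norm_sum_smul_le (c := χ) hu hv _ hR fun j hj => norm_secularCoeff_le _ (hσnn j)
          (hσanti (Fin.le_def.2 (Finset.mem_filter.1 hj).2)) hgap
    _ = _ := by ring

/-- Proposition 3: with `Z = [[U_k, 0], [0, I_s]]` built from the `k` leading left singular
vectors of `B`, the distance of a unit left singular vector `û = [f; y]` of `A = [B; E]`
(with singular value `σ' > σ_{k+1}`) from `range(Z)` is at most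
`γ σ_{k+1} / (σ'² - σ_{k+1}²)` with `γ = ‖Eᴴ y‖`. -/
theorem distance_bound_leading_left_singular_basis {m n s k : ℕ}
    (B : Matrix (Fin m) (Fin n) ℂ) (E : Matrix (Fin s) (Fin n) ℂ)
    (A : Matrix (Fin m ⊕ Fin s) (Fin n) ℂ) (hA : A = fromRows B E)
    (u : Fin (Nat.min m n) → Fin m → ℂ) (v : Fin (Nat.min m n) → Fin n → ℂ)
    (σ : Fin (Nat.min m n) → ℝ)
    (hu : ∀ i j, star (u i) ⬝ᵥ u j = if i = j then 1 else 0)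
    (hv : ∀ i j, star (v i) ⬝ᵥ v j = if i = j then 1 else 0)
    (hB : B = ∑ j, ((σ j : ℝ) : ℂ) • vecMulVec (u j) (star (v j)))
    (hσanti : Antitone σ) (hσnn : ∀ j, 0 ≤ σ j)
    (hkm : k < Nat.min m n)
    (σ' : ℝ) (f : Fin m → ℂ) (y : Fin s → ℂ)
    (hne : ∀ j, σ' ^ 2 ≠ (σ j) ^ 2)
    (hinv : IsUnit (B * Bᴴ - ((σ' : ℂ) ^ 2) • (1 : Matrix (Fin m) (Fin m) ℂ)))
    (hunit : ∑ i, Complex.normSq (Sum.elim f y i) = 1)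
    (hsv : (A * Aᴴ) *ᵥ Sum.elim f y = ((σ' : ℂ) ^ 2) • Sum.elim f y)
    (hgap : σ ⟨k, hkm⟩ < σ') :
    sInf {d : ℝ | ∃ (c : Fin k → ℂ) (w : Fin s → ℂ),
        d = l2norm (Sum.elim f y -
          Sum.elim (∑ j : Fin k, c j • u (Fin.castLE hkm.le j)) w)} ≤
      l2norm (Eᴴ *ᵥ y) * σ ⟨k, hkm⟩ / (σ' ^ 2 - (σ ⟨k, hkm⟩) ^ 2) :=
  distance_bound_leading_left_singular_basis_general B E A hA u v σ hu hv hB hσanti hσnn hkm σ' f y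
    hne hinv hsv hgap
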